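/- Let λ > 0 and β ∈ (0,1). For any embeddings U, V and weight vector w such that U and V are not both zero, the rescaled point (βU, βV, β⁻¹w) satisfies F(βU, βV, β⁻¹w) < F(U, V, w), where F is the generalized CF objective with the element-wise maximum interaction f(u,v) = max(u,v). In particular, since β > 0, max(βu_i, βv_j) = β·max(u_i, v_j) componentwise, so the data-fitting term is unchanged while the regularization term is strictly decreased. -/
import Mathlib


open Finset

/-- Generalized CF objective with the element-wise maximum interaction `f(u,v) = max(u,v)`:
`F(U,V,w) = Σ_{(i,j)∈Ω} ℓ(⟨w, max(u_i, v_j)⟩, O_{ij}) + (λ/2)Σ_i ‖u_i‖² + (λ/2)Σ_j ‖v_j‖²`. -/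
noncomputable def cfObjMax {k m n : ℕ} (lam : ℝ) (Ω : Finset (Fin m × Fin n))
    (O : Fin m × Fin n → ℝ) (ℓ : ℝ × ℝ → ℝ)
    (U : Fin m → Fin k → ℝ) (V : Fin n → Fin k → ℝ) (w : Fin k → ℝ) : ℝ :=
  (∑ p ∈ Ω, ℓ (∑ l, w l * max (U p.1 l) (V p.2 l), O p))
    + lam / 2 * ∑ i, ∑ l, (U i l) ^ 2
    + lam / 2 * ∑ j, ∑ l, (V j l) ^ 2

/-- For `λ > 0` and `β ∈ (0,1)`, if `U` and `V` are not both zero, then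
`F(βU, βV, β⁻¹w) < F(U, V, w)` for the element-wise maximum interaction; since `β > 0`,
`max(βu, βv) = β·max(u, v)` componentwise, so the data-fitting term is unchanged
while the regularization term strictly decreases. -/
theorem rescaling_decreases_max_objective {k m n : ℕ} (lam : ℝ) (hlam : 0 < lam)
    (β : ℝ) (hβ : β ∈ Set.Ioo (0 : ℝ) 1)
    (Ω : Finset (Fin m × Fin n)) (O : Fin m × Fin n → ℝ) (ℓ : ℝ × ℝ → ℝ)
    (U : Fin m → Fin k → ℝ) (V : Fin n → Fin k → ℝ) (w : Fin k → ℝ)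
    (hUV : ¬ (U = 0 ∧ V = 0)) :
    cfObjMax lam Ω O ℓ (fun i l => β * U i l) (fun j l => β * V j l)
        (fun l => β⁻¹ * w l)
      < cfObjMax lam Ω O ℓ U V w ∧
    (∀ i j l, max (β * U i l) (β * V j l) = β * max (U i l) (V j l)) ∧
    (∀ i j, (∑ l, (β⁻¹ * w l) * max (β * U i l) (β * V j l))
        = ∑ l, w l * max (U i l) (V j l)) ∧
    (lam / 2 * ∑ i, ∑ l, (β * U i l) ^ 2 + lam / 2 * ∑ j, ∑ l, (β * V j l) ^ 2
      < lam / 2 * ∑ i, ∑ l, (U i l) ^ 2 + lam / 2 * ∑ j, ∑ l, (V j l) ^ 2) := by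
  obtain ⟨hβ0, hβ1⟩ := hβ
  have hmax : ∀ (a b : ℝ), max (β * a) (β * b) = β * max a b := fun a b => by
    simpa [mul_comm] using (max_mul_of_nonneg a b hβ0.le).symm
  have hinner : ∀ i j, (∑ l, (β⁻¹ * w l) * max (β * U i l) (β * V j l))
      = ∑ l, w l * max (U i l) (V j l) := by
    intro i j
    refine Finset.sum_congr rfl fun l _ => ?_
    rw [hmax]
    field_simp
  have hSU : (0:ℝ) ≤ ∑ i, ∑ l, (U i l) ^ 2 :=
    Finset.sum_nonneg fun i _ => Finset.sum_nonneg fun l _ => sq_nonneg _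
  have hSV : (0:ℝ) ≤ ∑ j, ∑ l, (V j l) ^ 2 :=
    Finset.sum_nonneg fun j _ => Finset.sum_nonneg fun l _ => sq_nonneg _
  have hpos : 0 < (∑ i, ∑ l, (U i l) ^ 2) + ∑ j, ∑ l, (V j l) ^ 2 := by
    rcases lt_or_eq_of_le hSU with h | h
    · linarith
    rcases lt_or_eq_of_le hSV with h' | h'
    · linarith
    exfalso
    apply hUV
    constructor
    · funext i l
      have h1 : ∑ l, (U i l) ^ 2 = 0 := le_antisymm (by
        have := Finset.single_le_sum (f := fun x => ∑ l, (U x l) ^ 2)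
          (fun x _ => Finset.sum_nonneg fun l _ => sq_nonneg (U x l)) (Finset.mem_univ i)
        linarith) (Finset.sum_nonneg fun l _ => sq_nonneg _)
      have := (Finset.sum_eq_zero_iff_of_nonneg (fun l _ => sq_nonneg (U i l))).mp h1 l
        (Finset.mem_univ l)
      have := pow_eq_zero_iff (n := 2) (by norm_num) |>.mp this
      simpa using this
    · funext j l
      have h1 : ∑ l, (V j l) ^ 2 = 0 := le_antisymm (by
        have := Finset.single_le_sum (f := fun x => ∑ l, (V x l) ^ 2)
          (fun x _ => Finset.sum_nonneg fun l _ => sq_nonneg (V x l)) (Finset.mem_univ j)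
        linarith) (Finset.sum_nonneg fun l _ => sq_nonneg _)
      have := (Finset.sum_eq_zero_iff_of_nonneg (fun l _ => sq_nonneg (V j l))).mp h1 l
        (Finset.mem_univ l)
      have := pow_eq_zero_iff (n := 2) (by norm_num) |>.mp this
      simpa using this
  have hscaleU : ∑ i, ∑ l, (β * U i l) ^ 2 = β ^ 2 * ∑ i, ∑ l, (U i l) ^ 2 := by
    simp [Finset.mul_sum, mul_pow]
  have hscaleV : ∑ j, ∑ l, (β * V j l) ^ 2 = β ^ 2 * ∑ j, ∑ l, (V j l) ^ 2 := by
    simp [Finset.mul_sum, mul_pow]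
  have hβ2 : (0:ℝ) < 1 - β ^ 2 := by nlinarith
  have hreg : lam / 2 * ∑ i, ∑ l, (β * U i l) ^ 2 + lam / 2 * ∑ j, ∑ l, (β * V j l) ^ 2
      < lam / 2 * ∑ i, ∑ l, (U i l) ^ 2 + lam / 2 * ∑ j, ∑ l, (V j l) ^ 2 := by
    rw [hscaleU, hscaleV]
    nlinarith [mul_pos (mul_pos (half_pos hlam) hβ2) hpos]
  refine ⟨?_, fun i j l => hmax _ _, hinner, hreg⟩
  unfold cfObjMax
  have hdata : (∑ p ∈ Ω, ℓ (∑ l, (β⁻¹ * w l) * max (β * U p.1 l) (β * V p.2 l), O p))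
      = ∑ p ∈ Ω, ℓ (∑ l, w l * max (U p.1 l) (V p.2 l), O p) :=
    Finset.sum_congr rfl fun p _ => by rw [hinner]
  rw [hdata]
  linarith
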